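/- arXiv:1904.13031 — 7 statements merged into one kernel-verified Lean document; each statement's English description precedes it below -/
import Mathlib

section
/- Let X be a real Banach space, J its duality mapping, A : X → X* a bounded linear monotone operator, λ > 0, ε ≥ 0, x ∈ X, and f* ∈ X*. Suppose that (Ax + λ·Jx) ∩ B̄(f*, ε) ≠ ∅ and ε ≤ 2λ‖f*‖/(‖A‖ + 3λ). Then ⟨x, f*⟩ ≥ λ·((‖f*‖ − ε)/(‖A‖ + λ))² − ε·(‖f*‖ − ε)/(‖A‖ + λ). -/
/-!
Pairing the inclusion `‖Ax + λx* − f*‖ ≤ ε` with `x` and using `⟨Ax, x⟩ ≥ 0` gives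
`⟨x, f*⟩ ≥ λ‖x‖² − ε‖x‖`, while taking norms gives `‖x‖ ≥ t := (‖f*‖ − ε)/(‖A‖ + λ)`.
The smallness of `ε` is exactly `ε ≤ 2λt`: `t` lies to the right of the vertex `ε/(2λ)` of the
parabola `s ↦ λs² − εs`, which is increasing there, so its value at `‖x‖` dominates its value at `t`.
-/

open NormedSpace

/-- The duality mapping of a real normed space: `x* ∈ J x` iff `⟨x, x*⟩ = ‖x‖² = ‖x*‖²`. -/
def dualityMap {X : Type*} [NormedAddCommGroup X] [NormedSpace ℝ X] (x : X) :
    Set (StrongDual ℝ X) :=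
  {f | f x = ‖x‖ ^ 2 ∧ ‖x‖ ^ 2 = ‖f‖ ^ 2}

section DualityMap

variable {X : Type*} [NormedAddCommGroup X] [NormedSpace ℝ X] {x : X} {xs : StrongDual ℝ X}

theorem norm_eq_of_mem_dualityMap (h : xs ∈ dualityMap x) : ‖xs‖ = ‖x‖ :=
  (pow_left_inj₀ (norm_nonneg _) (norm_nonneg _) two_ne_zero).1 h.2.symm

theorem add_smul_apply_self_of_mem_dualityMap (A : X →L[ℝ] StrongDual ℝ X) (lam : ℝ)
    (h : xs ∈ dualityMap x) : (A x + lam • xs) x = A x x + lam * ‖x‖ ^ 2 := by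
  simp [h.1]

theorem norm_add_smul_le_of_mem_dualityMap (A : X →L[ℝ] StrongDual ℝ X) {lam : ℝ}
    (hlam : 0 ≤ lam) (h : xs ∈ dualityMap x) : ‖A x + lam • xs‖ ≤ (‖A‖ + lam) * ‖x‖ :=
  calc ‖A x + lam • xs‖ ≤ ‖A x‖ + ‖lam • xs‖ := norm_add_le _ _
    _ ≤ ‖A‖ * ‖x‖ + lam * ‖x‖ := by
      rw [norm_smul, norm_eq_of_mem_dualityMap h, Real.norm_of_nonneg hlam]
      gcongr
      exact A.le_opNorm x
    _ = (‖A‖ + lam) * ‖x‖ := by ring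

end DualityMap

theorem sub_mul_norm_le_apply_of_norm_sub_le {X : Type*} [NormedAddCommGroup X]
    [NormedSpace ℝ X] {g f : StrongDual ℝ X} {ε : ℝ} (h : ‖g - f‖ ≤ ε) (x : X) :
    g x - ε * ‖x‖ ≤ f x := by
  have : (g - f) x ≤ ε * ‖x‖ :=
    (le_abs_self _).trans ((g - f).le_of_opNorm_le h x)
  rw [sub_apply] at this
  linarith

theorem le_two_mul_mul_sub_div_of_le_div {a b lam ε : ℝ} (ha : 0 ≤ a) (hlam : 0 < lam)
    (h : ε ≤ 2 * lam * b / (a + 3 * lam)) : ε ≤ 2 * lam * ((b - ε) / (a + lam)) := by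
  rw [le_div_iff₀ (by positivity)] at h
  rw [mul_div_assoc', le_div_iff₀ (by positivity)]
  linarith

theorem mul_sq_sub_mul_le_mul_sq_sub_mul {lam ε t r : ℝ} (htr : t ≤ r)
    (hε : ε ≤ lam * (t + r)) : lam * t ^ 2 - ε * t ≤ lam * r ^ 2 - ε * r := by
  nlinarith [mul_nonneg (sub_nonneg.2 htr) (sub_nonneg.2 hε)]

theorem stmt3_general {X : Type*} [NormedAddCommGroup X] [NormedSpace ℝ X]
    (A : X →L[ℝ] StrongDual ℝ X)
    (hmono : ∀ x y : X, 0 ≤ (A x - A y) (x - y))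
    (lam : ℝ) (hlam : 0 < lam) (ε : ℝ)
    (x : X) (f : StrongDual ℝ X)
    (hmeet : ∃ xs ∈ dualityMap x, ‖A x + lam • xs - f‖ ≤ ε)
    (hεsmall : ε ≤ 2 * lam * ‖f‖ / (‖A‖ + 3 * lam)) :
    f x ≥ lam * ((‖f‖ - ε) / (‖A‖ + lam)) ^ 2 - ε * ((‖f‖ - ε) / (‖A‖ + lam)) := by
  obtain ⟨xs, hxs, hnear⟩ := hmeet
  have hAxx : 0 ≤ A x x := by simpa using hmono x 0
  have hfx : lam * ‖x‖ ^ 2 - ε * ‖x‖ ≤ f x := by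
    have := sub_mul_norm_le_apply_of_norm_sub_le hnear x
    rw [add_smul_apply_self_of_mem_dualityMap A lam hxs] at this
    linarith
  have hnorm : ‖f‖ - ε ≤ (‖A‖ + lam) * ‖x‖ := by
    linarith [norm_le_insert' f (A x + lam • xs), norm_sub_rev f (A x + lam • xs),
      norm_add_smul_le_of_mem_dualityMap A hlam.le hxs]
  set t := (‖f‖ - ε) / (‖A‖ + lam)
  have htx : t ≤ ‖x‖ := (div_le_iff₀' (by positivity)).2 hnorm
  have hεt : ε ≤ 2 * lam * t := le_two_mul_mul_sub_div_of_le_div (norm_nonneg A) hlam hεsmall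
  have hεtx : ε ≤ lam * (t + ‖x‖) := by nlinarith
  exact (mul_sq_sub_mul_le_mul_sq_sub_mul htx hεtx).trans hfx

theorem stmt3 {X : Type*} [NormedAddCommGroup X] [NormedSpace ℝ X] [CompleteSpace X]
    (A : X →L[ℝ] StrongDual ℝ X)
    (hmono : ∀ x y : X, 0 ≤ (A x - A y) (x - y))
    (lam : ℝ) (hlam : 0 < lam) (ε : ℝ) (hε : 0 ≤ ε)
    (x : X) (f : StrongDual ℝ X)
    (hmeet : ∃ xs ∈ dualityMap x, ‖A x + lam • xs - f‖ ≤ ε)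
    (hεsmall : ε ≤ 2 * lam * ‖f‖ / (‖A‖ + 3 * lam)) :
    f x ≥ lam * ((‖f‖ - ε) / (‖A‖ + lam)) ^ 2 - ε * ((‖f‖ - ε) / (‖A‖ + lam)) :=
  stmt3_general A hmono lam hlam ε x f hmeet hεsmall
end

section
/- The space ℓ¹(ℕ, ℝ) is rugged: the closed linear span of the set {u − v : u, v ∈ Jx for some x ∈ ℓ¹} equals ℓ∞, where J is the duality mapping of ℓ¹. More precisely, with e₁ and e₂ the first two canonical unit vectors of ℓ¹, the set Je₁ − Je₁ + Je₂ − Je₂ ⊆ ℓ∞ contains every sequence each of whose entries lies in [−2, 2]. -/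
/-!
`J eᵢ` contains every `y ∈ ℓ∞` with `‖y‖∞ ≤ 1` and `yᵢ = 1`. Hence `J e₀ − J e₀` contains every
vector of sup-norm at most `2` vanishing at `0`, and `J e₁ − J e₁` every vector supported at `0`
with entry in `[−2, 2]`. So `Je₀ − Je₀ + Je₁ − Je₁` contains the closed ball of radius `2`, and
the span of `ran (J − J)`, absorbing a ball, is already all of `ℓ∞` before taking its closure.
-/

/-- The duality mapping of `ℓ¹(ℕ, ℝ)`, with values viewed in `ℓ∞(ℕ, ℝ)`:
`y ∈ J x` iff `⟨x, y⟩ = ‖x‖₁² = ‖y‖∞²`. -/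
def dualityMapL1 (x : lp (fun _ : ℕ => ℝ) 1) : Set (lp (fun _ : ℕ => ℝ) ⊤) :=
  {y | ∑' n, x n * y n = ‖x‖ ^ 2 ∧ ‖x‖ ^ 2 = ‖y‖ ^ 2}

open Metric

theorem Submodule.eq_top_of_closedBall_subset {𝕜 E : Type*} [NontriviallyNormedField 𝕜]
    [SeminormedAddCommGroup E] [NormedSpace 𝕜 E] (s : Submodule 𝕜 E) {r : ℝ} (hr : 0 < r)
    (hs : closedBall (0 : E) r ⊆ s) : s = ⊤ :=
  s.eq_top_of_nonempty_interior'
    ⟨0, mem_interior_iff_mem_nhds.2 (Filter.mem_of_superset (closedBall_mem_nhds 0 hr) hs)⟩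

local notation "ℓ∞" => lp (fun _ : ℕ => ℝ) ⊤

theorem mem_dualityMapL1_single {i : ℕ} {y : ℓ∞} (hy : ‖y‖ ≤ 1) (hyi : y i = 1) :
    y ∈ dualityMapL1 (lp.single 1 i 1) := by
  have h_single : ‖lp.single (E := fun _ : ℕ => ℝ) 1 i 1‖ = 1 := by
    simp [lp.norm_single (E := fun _ : ℕ => ℝ) (p := 1) (by norm_num) i (1 : ℝ)]
  have hy_norm : ‖y‖ = 1 :=
    hy.antisymm (by simpa [hyi] using lp.norm_apply_le_norm ENNReal.top_ne_zero y i)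
  refine ⟨?_, by rw [h_single, hy_norm]⟩
  rw [tsum_eq_single i fun j hj => by rw [lp.single_apply_ne 1 i _ hj, zero_mul],
    lp.single_apply_self, hyi, h_single]
  norm_num

noncomputable def updateOne (i : ℕ) (w : ℓ∞) : ℓ∞ := w + (1 - w i) • lp.single ⊤ i 1

theorem updateOne_apply (i : ℕ) (w : ℓ∞) (j : ℕ) :
    updateOne i w j = if j = i then 1 else w j := by
  rw [updateOne, lp.coeFn_add, lp.coeFn_smul, Pi.add_apply, Pi.smul_apply, lp.single_apply]
  rcases eq_or_ne j i with rfl | hj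
  · simp
  · simp [hj]

theorem updateOne_mem_dualityMapL1 (i : ℕ) {w : ℓ∞} (hw : ‖w‖ ≤ 1) :
    updateOne i w ∈ dualityMapL1 (lp.single 1 i 1) := by
  refine mem_dualityMapL1_single (lp.norm_le_of_forall_le zero_le_one fun j => ?_) ?_
  · rw [updateOne_apply]
    rcases eq_or_ne j i with rfl | hj
    · simp
    · simpa [hj] using (lp.norm_apply_le_norm ENNReal.top_ne_zero w j).trans hw
  · simp [updateOne_apply]

theorem exists_eq_sub_add_sub_of_norm_le_two {z : ℓ∞} (hz : ‖z‖ ≤ 2) :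
    ∃ a b c d,
        a ∈ dualityMapL1 (lp.single 1 0 (1 : ℝ)) ∧ b ∈ dualityMapL1 (lp.single 1 0 (1 : ℝ)) ∧
        c ∈ dualityMapL1 (lp.single 1 1 (1 : ℝ)) ∧ d ∈ dualityMapL1 (lp.single 1 1 (1 : ℝ)) ∧
        z = a - b + c - d := by
  set w : ℓ∞ := (2⁻¹ : ℝ) • z
  set v : ℓ∞ := w 0 • lp.single ⊤ 0 1
  have hw : ‖w‖ ≤ 1 := by
    rw [norm_smul]
    norm_num
    linarith
  have hv : ‖v‖ ≤ 1 := lp.norm_le_of_forall_le zero_le_one fun j => calc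
    ‖v j‖ ≤ ‖w 0‖ := by
      rcases eq_or_ne j 0 with rfl | hj
      · simp [v]
      · simp [v, hj]
    _ ≤ 1 := (lp.norm_apply_le_norm ENNReal.top_ne_zero w 0).trans hw
  refine ⟨updateOne 0 w, updateOne 0 (-w), updateOne 1 v, updateOne 1 (-v),
    updateOne_mem_dualityMapL1 0 hw, updateOne_mem_dualityMapL1 0 (by rwa [norm_neg]),
    updateOne_mem_dualityMapL1 1 hv, updateOne_mem_dualityMapL1 1 (by rwa [norm_neg]), ?_⟩
  ext (_ | _ | n) <;> simp [updateOne_apply] <;> simp [w, v, lp.single_apply] <;> ring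

theorem stmt11 :
    (Submodule.span ℝ {d : lp (fun _ : ℕ => ℝ) ⊤ |
        ∃ x u v, u ∈ dualityMapL1 x ∧ v ∈ dualityMapL1 x ∧ d = u - v}).topologicalClosure
      = ⊤ ∧
    (∀ z : lp (fun _ : ℕ => ℝ) ⊤, (∀ n, z n ∈ Set.Icc (-2 : ℝ) 2) →
      ∃ a b c d,
        a ∈ dualityMapL1 (lp.single 1 0 (1 : ℝ)) ∧ b ∈ dualityMapL1 (lp.single 1 0 (1 : ℝ)) ∧
        c ∈ dualityMapL1 (lp.single 1 1 (1 : ℝ)) ∧ d ∈ dualityMapL1 (lp.single 1 1 (1 : ℝ)) ∧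
        z = a - b + c - d) := by
  refine ⟨?_, fun z hz => exists_eq_sub_add_sub_of_norm_le_two
    (lp.norm_le_of_forall_le zero_le_two fun n => abs_le.2 (hz n))⟩
  set S := Submodule.span ℝ {d : ℓ∞ |
    ∃ x u v, u ∈ dualityMapL1 x ∧ v ∈ dualityMapL1 x ∧ d = u - v}
  have hS : S = ⊤ := S.eq_top_of_closedBall_subset two_pos fun z hz => by
    obtain ⟨a, b, c, d, ha, hb, hc, hd, rfl⟩ :=
      exists_eq_sub_add_sub_of_norm_le_two (mem_closedBall_zero_iff.1 hz)
    rw [show a - b + c - d = (a - b) + (c - d) by abel]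
    exact S.add_mem (Submodule.subset_span ⟨_, a, b, ha, hb, rfl⟩)
      (Submodule.subset_span ⟨_, c, d, hc, hd, rfl⟩)
  rw [hS]
  exact eq_top_iff.2 (Submodule.le_topologicalClosure ⊤)
end

section
/- Let X be a rugged real Banach space (i.e., the closed linear span of ran(J − J) equals X*, where J is the duality mapping), let A : X → X* be a linear operator, and let λ > 0. Then the closed convex hull of the closure of the range of A + λJ equals X*. -/
open NormedSpace

/-!
Since `J` is homogeneous (`t • J x ⊆ J (t • x)` for every real `t`) and `A` is linear, the set
`ran (A + λJ)` is invariant under all real scalings, so its convex hull is already a linear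
subspace. That subspace contains `λ (u - v) = (A x + λ u) - (A x + λ v)` for `u, v ∈ J x`, hence
the span of `ran (J - J)`, which is dense by ruggedness.
-/

theorem smul_mem_dualityMap {X : Type*} [NormedAddCommGroup X] [NormedSpace ℝ X]
    {x : X} {u : StrongDual ℝ X} (h : u ∈ dualityMap x) (t : ℝ) :
    t • u ∈ dualityMap (t • x) := by
  obtain ⟨hux, hnorm⟩ := h
  constructor
  · rw [smul_apply, map_smul, hux, norm_smul, Real.norm_eq_abs, mul_pow,
      sq_abs, smul_eq_mul, smul_eq_mul]
    ring
  · rw [norm_smul, norm_smul, mul_pow, mul_pow, hnorm]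

section ConvexHull

open scoped Pointwise

variable {E : Type*} [AddCommGroup E] [Module ℝ E] {s : Set E}

theorem smul_mem_convexHull_of_forall_smul_mem (hs : ∀ (t : ℝ), ∀ x ∈ s, t • x ∈ s) (t : ℝ)
    {y : E} (hy : y ∈ convexHull ℝ s) : t • y ∈ convexHull ℝ s := by
  have hsub : t • convexHull ℝ s ⊆ convexHull ℝ s := by
    rw [← convexHull_smul]
    exact convexHull_mono (by rintro _ ⟨x, hx, rfl⟩; exact hs t x hx)
  exact hsub (Set.smul_mem_smul_set hy)

theorem span_subset_convexHull_of_forall_smul_mem (hs : ∀ (t : ℝ), ∀ x ∈ s, t • x ∈ s)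
    (hne : s.Nonempty) : (Submodule.span ℝ s : Set E) ⊆ convexHull ℝ s := by
  have hsmul := smul_mem_convexHull_of_forall_smul_mem hs
  intro y hy
  induction hy using Submodule.span_induction with
  | mem x hx => exact subset_convexHull ℝ s hx
  | zero =>
    obtain ⟨x, hx⟩ := hne
    simpa using hsmul 0 (subset_convexHull ℝ s hx)
  | add x y _ _ hx hy =>
    have hmid := convex_convexHull ℝ s (hsmul 2 hx) (hsmul 2 hy) (by norm_num : (0 : ℝ) ≤ 1 / 2)
      (by norm_num : (0 : ℝ) ≤ 1 / 2) (by norm_num)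
    rwa [smul_smul, smul_smul, one_div_mul_cancel two_ne_zero, one_smul, one_smul] at hmid
  | smul t x _ hx => exact hsmul t hx

end ConvexHull

theorem stmt12_general {X : Type*} [NormedAddCommGroup X] [NormedSpace ℝ X]
    (hrugged : (Submodule.span ℝ {d : StrongDual ℝ X |
        ∃ x u v, u ∈ dualityMap x ∧ v ∈ dualityMap x ∧ d = u - v}).topologicalClosure = ⊤)
    (A : X →ₗ[ℝ] StrongDual ℝ X) (lam : ℝ) (hlam : 0 < lam) :
    closure (convexHull ℝ
        (closure {f : StrongDual ℝ X | ∃ x xs, xs ∈ dualityMap x ∧ f = A x + lam • xs}))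
      = Set.univ := by
  set R := {f : StrongDual ℝ X | ∃ x xs, xs ∈ dualityMap x ∧ f = A x + lam • xs}
  set D := {d : StrongDual ℝ X | ∃ x u v, u ∈ dualityMap x ∧ v ∈ dualityMap x ∧ d = u - v}
  have hR : ∀ (t : ℝ), ∀ f ∈ R, t • f ∈ R := by
    rintro t _ ⟨x, xs, hxs, rfl⟩
    exact ⟨t • x, t • xs, smul_mem_dualityMap hxs t, by rw [smul_add, map_smul, smul_comm]⟩
  have h0R : (0 : StrongDual ℝ X) ∈ R := ⟨0, 0, by simp [dualityMap], by simp⟩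
  have hDR : D ⊆ Submodule.span ℝ R := by
    rintro _ ⟨x, u, v, hu, hv, rfl⟩
    have hsub : u - v = lam⁻¹ • ((A x + lam • u) - (A x + lam • v)) := by
      rw [add_sub_add_left_eq_sub, smul_sub, inv_smul_smul₀ hlam.ne', inv_smul_smul₀ hlam.ne']
    rw [hsub]
    exact Submodule.smul_mem _ _
      (Submodule.sub_mem _ (Submodule.subset_span ⟨x, u, hu, rfl⟩)
        (Submodule.subset_span ⟨x, v, hv, rfl⟩))
  refine Set.eq_univ_of_univ_subset ?_
  calc Set.univ = closure (Submodule.span ℝ D : Set (StrongDual ℝ X)) := by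
        rw [← Submodule.topologicalClosure_coe, hrugged, Submodule.top_coe]
    _ ⊆ closure (Submodule.span ℝ R) := closure_mono (Submodule.span_le.2 hDR)
    _ ⊆ closure (convexHull ℝ R) :=
        closure_mono (span_subset_convexHull_of_forall_smul_mem hR ⟨0, h0R⟩)
    _ ⊆ closure (convexHull ℝ (closure R)) := closure_mono (convexHull_mono subset_closure)

theorem stmt12 {X : Type*} [NormedAddCommGroup X] [NormedSpace ℝ X] [CompleteSpace X]
    (hrugged : (Submodule.span ℝ {d : StrongDual ℝ X |
        ∃ x u v, u ∈ dualityMap x ∧ v ∈ dualityMap x ∧ d = u - v}).topologicalClosure = ⊤)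
    (A : X →ₗ[ℝ] StrongDual ℝ X) (lam : ℝ) (hlam : 0 < lam) :
    closure (convexHull ℝ
        (closure {f : StrongDual ℝ X | ∃ x xs, xs ∈ dualityMap x ∧ f = A x + lam • xs}))
      = Set.univ :=
  stmt12_general hrugged A lam hlam
end

section
/- Let X be a rugged real Banach space, A : X → X* a linear operator, and λ > 0. Then the following are equivalent: (i) the closure of ran(A + λJ) equals X*; (ii) the closure of ran(A + λJ) is a linear subspace of X*; (iii) the closure of ran(A + λJ) is convex. -/
open NormedSpace

/-!
The range `ran (A + λJ)` is invariant under all real scalings, because `J` is homogeneous and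
`A` is linear; hence so is its closure `R`. A convex set invariant under all scalings is a linear
subspace. If `R` is a closed subspace, it contains `λ (u - v) = (A x + λ u) - (A x + λ v)` for all
`u, v ∈ J x`, hence the closed span of `ran (J - J)`, which is `X*` by ruggedness.
-/

section ScalingInvariant

variable {𝕜 E : Type*}

theorem smul_mem_closure_of_forall_smul_mem [TopologicalSpace E] [SMul 𝕜 E]
    [ContinuousConstSMul 𝕜 E] {s : Set E} (hs : ∀ (t : 𝕜), ∀ x ∈ s, t • x ∈ s)
    (t : 𝕜) {x : E} (hx : x ∈ closure s) : t • x ∈ closure s :=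
  map_mem_closure (continuous_const_smul t) hx (hs t)

theorem Convex.exists_submodule_eq_of_forall_smul_mem [Field 𝕜] [LinearOrder 𝕜]
    [IsStrictOrderedRing 𝕜] [AddCommGroup E] [Module 𝕜 E] {s : Set E} (hconv : Convex 𝕜 s)
    (h0 : (0 : E) ∈ s) (hs : ∀ (t : 𝕜), ∀ x ∈ s, t • x ∈ s) :
    ∃ p : Submodule 𝕜 E, s = p := by
  refine ⟨{ carrier := s, zero_mem' := h0, add_mem' := ?_, smul_mem' := hs }, rfl⟩
  intro x y hx hy
  have hmid := hconv hx hy (by norm_num : (0 : 𝕜) ≤ 1 / 2) (by norm_num : (0 : 𝕜) ≤ 1 / 2)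
    (by norm_num)
  have hdouble : (2 : 𝕜) • ((1 / 2 : 𝕜) • x + (1 / 2 : 𝕜) • y) = x + y := by
    rw [smul_add, smul_smul, smul_smul]
    norm_num
  simpa only [hdouble] using hs 2 _ hmid

end ScalingInvariant

section DualityMap

variable {X : Type*} [NormedAddCommGroup X] [NormedSpace ℝ X]

theorem zero_mem_dualityMap_zero : (0 : StrongDual ℝ X) ∈ dualityMap (0 : X) := by
  simp [dualityMap]

theorem smul_mem_dualityMap_smul {x : X} {f : StrongDual ℝ X} (t : ℝ) (hf : f ∈ dualityMap x) :
    t • f ∈ dualityMap (t • x) := by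
  obtain ⟨hfx, hnorm⟩ := hf
  constructor
  · simp only [smul_apply, map_smul, smul_eq_mul, hfx, norm_smul, mul_pow,
      Real.norm_eq_abs, sq_abs]
    ring
  · rw [norm_smul, norm_smul, mul_pow, mul_pow, hnorm]

/-- `ran (J - J)`. -/
def dualityMapDiffs : Set (StrongDual ℝ X) :=
  {d | ∃ x u v, u ∈ dualityMap x ∧ v ∈ dualityMap x ∧ d = u - v}

/-- `ran (A + λJ)`. -/
def rangeAddSMulDualityMap (A : X →ₗ[ℝ] StrongDual ℝ X) (lam : ℝ) : Set (StrongDual ℝ X) :=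
  {f | ∃ x xs, xs ∈ dualityMap x ∧ f = A x + lam • xs}

variable (A : X →ₗ[ℝ] StrongDual ℝ X) (lam : ℝ)

theorem zero_mem_rangeAddSMulDualityMap : (0 : StrongDual ℝ X) ∈ rangeAddSMulDualityMap A lam :=
  ⟨0, 0, zero_mem_dualityMap_zero, by simp⟩

theorem smul_mem_rangeAddSMulDualityMap (t : ℝ) {f : StrongDual ℝ X}
    (hf : f ∈ rangeAddSMulDualityMap A lam) : t • f ∈ rangeAddSMulDualityMap A lam := by
  obtain ⟨x, xs, hxs, rfl⟩ := hf
  refine ⟨t • x, t • xs, smul_mem_dualityMap_smul t hxs, ?_⟩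
  rw [map_smul]
  module

theorem dualityMapDiffs_subset_of_rangeAddSMulDualityMap_subset {lam : ℝ} (hlam : lam ≠ 0)
    {p : Submodule ℝ (StrongDual ℝ X)} (hp : rangeAddSMulDualityMap A lam ⊆ p) :
    dualityMapDiffs ⊆ (p : Set (StrongDual ℝ X)) := by
  rintro d ⟨x, u, v, hu, hv, rfl⟩
  have hdiff : lam • (u - v) ∈ p := by
    have := p.sub_mem (hp ⟨x, u, hu, rfl⟩) (hp ⟨x, v, hv, rfl⟩)
    rwa [show A x + lam • u - (A x + lam • v) = lam • (u - v) by module] at this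
  simpa only [inv_smul_smul₀ hlam, SetLike.mem_coe] using p.smul_mem lam⁻¹ hdiff

theorem eq_top_of_rangeAddSMulDualityMap_subset
    (hrugged : (Submodule.span ℝ (dualityMapDiffs (X := X))).topologicalClosure = ⊤)
    {lam : ℝ} (hlam : lam ≠ 0) {p : Submodule ℝ (StrongDual ℝ X)}
    (hclosed : IsClosed (p : Set (StrongDual ℝ X))) (hp : rangeAddSMulDualityMap A lam ⊆ p) :
    p = ⊤ := by
  have hspan := Submodule.span_le.mpr
    (dualityMapDiffs_subset_of_rangeAddSMulDualityMap_subset A hlam hp)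
  rw [← top_le_iff, ← hrugged]
  exact Submodule.topologicalClosure_minimal _ hspan hclosed

end DualityMap

theorem stmt13_general {X : Type*} [NormedAddCommGroup X] [NormedSpace ℝ X]
    (hrugged : (Submodule.span ℝ {d : StrongDual ℝ X |
        ∃ x u v, u ∈ dualityMap x ∧ v ∈ dualityMap x ∧ d = u - v}).topologicalClosure = ⊤)
    (A : X →ₗ[ℝ] StrongDual ℝ X) (lam : ℝ) (hlam : 0 < lam) :
    let R := closure {f : StrongDual ℝ X | ∃ x xs, xs ∈ dualityMap x ∧ f = A x + lam • xs}
    (R = Set.univ ↔ ∃ p : Submodule ℝ (StrongDual ℝ X), R = ↑p) ∧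
    ((∃ p : Submodule ℝ (StrongDual ℝ X), R = ↑p) ↔ Convex ℝ R) := by
  change let R := closure (rangeAddSMulDualityMap A lam)
    (R = Set.univ ↔ ∃ p : Submodule ℝ (StrongDual ℝ X), R = ↑p) ∧
    ((∃ p : Submodule ℝ (StrongDual ℝ X), R = ↑p) ↔ Convex ℝ R)
  intro R
  have hR_smul : ∀ (t : ℝ), ∀ f ∈ R, t • f ∈ R := fun t _ hf =>
    smul_mem_closure_of_forall_smul_mem (fun t _ => smul_mem_rangeAddSMulDualityMap A lam t) t hf
  have hR_zero : (0 : StrongDual ℝ X) ∈ R := subset_closure (zero_mem_rangeAddSMulDualityMap A lam)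
  have hR_univ : (∃ p : Submodule ℝ (StrongDual ℝ X), R = ↑p) → R = Set.univ := by
    rintro ⟨p, hp⟩
    have hclosed : IsClosed (p : Set (StrongDual ℝ X)) := hp ▸ isClosed_closure
    rw [hp, eq_top_of_rangeAddSMulDualityMap_subset A hrugged hlam.ne' hclosed
      (hp ▸ subset_closure), Submodule.top_coe]
  refine ⟨⟨fun h => ⟨⊤, by rw [h, Submodule.top_coe]⟩, hR_univ⟩, ⟨?_, ?_⟩⟩
  · rintro ⟨p, hp⟩
    exact hp ▸ p.convex
  · exact fun hconv => hconv.exists_submodule_eq_of_forall_smul_mem hR_zero hR_smul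

theorem stmt13 {X : Type*} [NormedAddCommGroup X] [NormedSpace ℝ X] [CompleteSpace X]
    (hrugged : (Submodule.span ℝ {d : StrongDual ℝ X |
        ∃ x u v, u ∈ dualityMap x ∧ v ∈ dualityMap x ∧ d = u - v}).topologicalClosure = ⊤)
    (A : X →ₗ[ℝ] StrongDual ℝ X) (lam : ℝ) (hlam : 0 < lam) :
    let R := closure {f : StrongDual ℝ X | ∃ x xs, xs ∈ dualityMap x ∧ f = A x + lam • xs}
    (R = Set.univ ↔ ∃ p : Submodule ℝ (StrongDual ℝ X), R = ↑p) ∧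
    ((∃ p : Submodule ℝ (StrongDual ℝ X), R = ↑p) ↔ Convex ℝ R) :=
  stmt13_general hrugged A lam hlam
end

section
/- The Gossez operator G : ℓ¹ → ℓ∞, defined by (Gx)ₙ = −Σ_{k<n} x_k + Σ_{k>n} x_k, is a bounded linear operator with ‖G‖ = 1 and is skew: ⟨x, Gx⟩ = 0 for every x ∈ ℓ¹ (in particular G is monotone). -/
/-!
Writing `s n = ∑_{k<n} x k` and `S = ∑ x`, one has `(G x) n = S - s n - s (n+1)` and
`x n = s (n+1) - s n`, so `x n * (G x) n = x n * S - (s (n+1)² - s n²)` telescopes: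
`∑_{n<N} x n * (G x) n = s N * (S - s N) → 0`.
Since `(G x) n = ∑ₖ ± x k` with the sign `0` at `k = n`, `‖G x‖∞ ≤ ‖x‖₁`, and `G e₀` has entry
`-1` at `n = 1`, so `‖G‖ = 1`.
-/

open Finset

noncomputable section

def gossez (x : ℕ → ℝ) (n : ℕ) : ℝ :=
  -(∑ k ∈ range n, x k) + ∑' k : ℕ, if n < k then x k else 0

section Summable

variable {x y : ℕ → ℝ}

theorem tsum_ite_lt_eq_tsum_sub (hx : Summable x) (n : ℕ) :
    ∑' k, (if n < k then x k else 0) = ∑' k, x k - ∑ k ∈ range (n + 1), x k := by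
  have htail : Summable fun i => x (i + (n + 1)) := (summable_nat_add_iff _).2 hx
  have hshift : ∀ i, (if n < i + (n + 1) then x (i + (n + 1)) else 0) = x (i + (n + 1)) :=
    fun i => if_pos (by omega)
  have hsplit := Summable.sum_add_tsum_nat_add' (f := fun k => if n < k then x k else 0)
    (k := n + 1) (by simpa only [hshift] using htail)
  rw [sum_eq_zero fun k hk => if_neg (by simp at hk; omega)] at hsplit
  rw [← hx.sum_add_tsum_nat_add (n + 1), ← hsplit]
  simp only [hshift, zero_add, add_sub_cancel_left]

theorem gossez_eq (hx : Summable x) (n : ℕ) :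
    gossez x n = ∑' k, x k - ∑ k ∈ range n, x k - ∑ k ∈ range (n + 1), x k := by
  rw [gossez, tsum_ite_lt_eq_tsum_sub hx]
  ring

theorem gossez_add (hx : Summable x) (hy : Summable y) : gossez (x + y) = gossez x + gossez y := by
  funext n
  rw [Pi.add_apply, gossez_eq (x := x + y) (hx.add hy), gossez_eq hx, gossez_eq hy]
  simp only [Pi.add_apply, hx.tsum_add hy, sum_add_distrib]
  ring

theorem gossez_smul (hx : Summable x) (c : ℝ) : gossez (c • x) = c • gossez x := by
  funext n
  rw [Pi.smul_apply, gossez_eq (x := c • x) (hx.const_smul c), gossez_eq hx]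
  simp only [Pi.smul_apply, smul_eq_mul, tsum_mul_left, ← mul_sum]
  ring

theorem norm_gossez_le (hx : Summable x) (n : ℕ) : ‖gossez x n‖ ≤ ∑' k, ‖x k‖ := by
  set w : ℕ → ℝ := fun k => (if k < n then -x k else 0) + if n < k then x k else 0
  have hw : ∀ k, ‖w k‖ ≤ ‖x k‖ := fun k => by
    simp only [w]
    split_ifs <;> first | omega | simp
  have hsum : Summable fun k => ‖w k‖ :=
    .of_nonneg_of_le (fun _ => norm_nonneg _) hw hx.norm
  have hhead : -(∑ k ∈ range n, x k) = ∑' k, if k < n then -x k else 0 := by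
    rw [tsum_eq_sum (s := range n) fun k hk => if_neg (by simpa using hk), ← sum_neg_distrib]
    exact sum_congr rfl fun k hk => (if_pos (by simpa using hk)).symm
  have hgw : gossez x n = ∑' k, w k := by
    rw [gossez, hhead, Summable.tsum_add]
    · exact .of_norm_bounded hx.norm fun k => by split_ifs <;> simp
    · exact .of_norm_bounded hx.norm fun k => by split_ifs <;> simp
  rw [hgw]
  exact (norm_tsum_le_tsum_norm hsum).trans (hsum.tsum_le_tsum hw hx.norm)

theorem sum_range_mul_gossez (hx : Summable x) (N : ℕ) :
    ∑ n ∈ range N, x n * gossez x n = (∑ k ∈ range N, x k) * (∑' k, x k - ∑ k ∈ range N, x k) := by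
  induction N with
  | zero => simp
  | succ N ih =>
    rw [sum_range_succ, ih, gossez_eq hx, sum_range_succ x N]
    ring

theorem tsum_mul_gossez_eq_zero (hx : Summable x) : ∑' n, x n * gossez x n = 0 := by
  have hsum : Summable fun n => x n * gossez x n :=
    .of_norm_bounded (hx.norm.mul_right (∑' k, ‖x k‖)) fun n => by
      rw [norm_mul]
      exact mul_le_mul_of_nonneg_left (norm_gossez_le hx n) (norm_nonneg _)
  refine ((hsum.hasSum_iff_tendsto_nat).2 ?_).tsum_eq
  have hs := hx.hasSum.tendsto_sum_nat
  simpa [sum_range_mul_gossez hx] using hs.mul ((tendsto_const_nhds (x := ∑' k, x k)).sub hs)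

end Summable

local notation "ℓ¹" => lp (fun _ : ℕ => ℝ) 1
local notation "ℓ∞" => lp (fun _ : ℕ => ℝ) ⊤

theorem lp_one_norm_eq_tsum (x : ℓ¹) : ‖x‖ = ∑' k, ‖x k‖ := by
  rw [lp.norm_eq_tsum_rpow (by norm_num)]
  simp

theorem lp_one_summable (x : ℓ¹) : Summable x :=
  (lp.memℓp x).summable_of_one

def gossezLinearMap : ℓ¹ →ₗ[ℝ] ℓ∞ where
  toFun x := ⟨gossez x, memℓp_infty ⟨∑' k, ‖x k‖, by
    rintro _ ⟨n, rfl⟩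
    exact norm_gossez_le (lp_one_summable x) n⟩⟩
  map_add' x y := lp.ext <| gossez_add (lp_one_summable x) (lp_one_summable y)
  map_smul' c x := lp.ext <| gossez_smul (lp_one_summable x) c

theorem norm_gossezLinearMap_le (x : ℓ¹) : ‖gossezLinearMap x‖ ≤ 1 * ‖x‖ := by
  rw [one_mul, lp_one_norm_eq_tsum]
  exact lp.norm_le_of_forall_le (tsum_nonneg fun _ => norm_nonneg _)
    (norm_gossez_le (lp_one_summable x))

def gossezCLM : ℓ¹ →L[ℝ] ℓ∞ :=
  gossezLinearMap.mkContinuous 1 norm_gossezLinearMap_le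

theorem gossezCLM_apply (x : ℓ¹) (n : ℕ) : gossezCLM x n = gossez x n := rfl

theorem gossez_single_zero_one : gossez (lp.single 1 0 (1 : ℝ) : ℓ¹) 1 = -1 := by
  rw [gossez_eq (lp_one_summable _),
    tsum_eq_sum (s := {0}) fun k hk => lp.single_apply_ne _ _ _ (by simpa using hk)]
  simp

theorem norm_gossezCLM : ‖gossezCLM‖ = 1 := by
  refine le_antisymm (LinearMap.mkContinuous_norm_le _ zero_le_one _) ?_
  set e : ℓ¹ := lp.single 1 0 1
  have he : ‖e‖ = 1 := by simp [e, lp.norm_single]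
  calc (1 : ℝ) = ‖gossezCLM e 1‖ := by simp [gossezCLM_apply, e, gossez_single_zero_one]
    _ ≤ ‖gossezCLM e‖ := lp.norm_apply_le_norm ENNReal.top_ne_zero _ _
    _ ≤ ‖gossezCLM‖ * ‖e‖ := gossezCLM.le_opNorm e
    _ = ‖gossezCLM‖ := by rw [he, mul_one]

end

theorem stmt16 :
    ∃ G : lp (fun _ : ℕ => ℝ) 1 →L[ℝ] lp (fun _ : ℕ => ℝ) ⊤,
      (∀ x : lp (fun _ : ℕ => ℝ) 1, ∀ n : ℕ,
        G x n = -(∑ k ∈ Finset.range n, x k) + ∑' k : ℕ, if n < k then x k else 0) ∧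
      ‖G‖ = 1 ∧
      ∀ x : lp (fun _ : ℕ => ℝ) 1, ∑' n, x n * G x n = 0 :=
  ⟨gossezCLM, fun _ _ => rfl, norm_gossezCLM,
    fun x => tsum_mul_gossez_eq_zero (lp_one_summable x)⟩
end

section
/- The Gossez operator G on ℓ¹ together with f* = −(1,1,1,...) ∈ ℓ∞ satisfies the whs condition: for every λ > 0 and ε > 0, if x ∈ ℓ¹ and there exists x* ∈ Jx with ‖Gx + λx* − f*‖∞ ≤ ε, then ⟨x, f*⟩ ≤ 3ε. Consequently, for every λ > 0, the closure of ran(G + λJ) in ℓ∞ is not convex, while its closed convex hull equals ℓ∞. -/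
open Filter Topology Finset

local notation "ℓ¹" => lp (fun _ : ℕ => ℝ) 1
local notation "ℓ∞" => lp (fun _ : ℕ => ℝ) ⊤

noncomputable def gossezSeq (x : ℕ → ℝ) (n : ℕ) : ℝ :=
  -(∑ k ∈ range n, x k) + ∑' k : ℕ, if n < k then x k else 0

section GossezSeq

variable {x : ℕ → ℝ} {s : ℝ}

lemma hasSum_ite_lt (hx : HasSum x s) (n : ℕ) :
    HasSum (fun k => if n < k then x k else 0) (s - ∑ k ∈ range (n + 1), x k) := by
  have hhead : HasSum (fun k => if n < k then 0 else x k) (∑ k ∈ range (n + 1), x k) := by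
    have h : HasSum (fun k => if n < k then 0 else x k)
        (∑ k ∈ range (n + 1), if n < k then 0 else x k) :=
      hasSum_sum_of_ne_finset_zero fun k hk => if_pos (by simpa [Nat.lt_succ_iff] using hk)
    rwa [sum_congr rfl fun k hk => if_neg (by simpa [Nat.lt_succ_iff] using hk)] at h
  refine (hx.sub hhead).congr_fun fun k => ?_
  split_ifs <;> ring

lemma gossezSeq_eq (hx : HasSum x s) (n : ℕ) :
    gossezSeq x n = s - ∑ k ∈ range n, x k - ∑ k ∈ range (n + 1), x k := by
  rw [gossezSeq, (hasSum_ite_lt hx n).tsum_eq]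
  ring

lemma tendsto_gossezSeq (hx : HasSum x s) : Tendsto (gossezSeq x) atTop (𝓝 (-s)) := by
  have hσ := hx.tendsto_sum_nat
  have hlim := (tendsto_const_nhds (x := s)).sub hσ |>.sub (hσ.comp (tendsto_add_atTop_nat 1))
  rw [show s - s - s = -s by ring] at hlim
  exact hlim.congr fun n => (gossezSeq_eq hx n).symm

lemma sum_range_mul_gossezSeq (hx : HasSum x s) (N : ℕ) :
    ∑ n ∈ range N, x n * gossezSeq x n = s * ∑ n ∈ range N, x n - (∑ n ∈ range N, x n) ^ 2 := by
  induction N with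
  | zero => simp
  | succ N ih =>
    rw [sum_range_succ, ih, gossezSeq_eq hx, sum_range_succ]
    ring

lemma tendsto_sum_range_mul_gossezSeq (hx : HasSum x s) :
    Tendsto (fun N => ∑ n ∈ range N, x n * gossezSeq x n) atTop (𝓝 0) := by
  have hσ := hx.tendsto_sum_nat
  have hlim := (tendsto_const_nhds (x := s)).mul hσ |>.sub (hσ.pow 2)
  rw [show s * s - s ^ 2 = 0 by ring] at hlim
  exact hlim.congr fun N => (sum_range_mul_gossezSeq hx N).symm

end GossezSeq

lemma hasSum_abs_l1 (x : ℓ¹) : HasSum (fun n => |x n|) ‖x‖ := by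
  simpa using lp.hasSum_norm (p := 1) (by norm_num) x

lemma abs_apply_le_norm_linf (y : ℓ∞) (n : ℕ) : |y n| ≤ ‖y‖ :=
  lp.norm_apply_le_norm ENNReal.top_ne_zero y n

lemma abs_mul_apply_le (x : ℓ¹) (y : ℓ∞) (n : ℕ) : |x n * y n| ≤ |x n| * ‖y‖ := by
  rw [abs_mul]
  exact mul_le_mul_of_nonneg_left (abs_apply_le_norm_linf y n) (abs_nonneg _)

lemma summable_mul_l1_linf (x : ℓ¹) (y : ℓ∞) : Summable fun n => x n * y n :=
  .of_norm_bounded ((hasSum_abs_l1 x).summable.mul_right ‖y‖) (abs_mul_apply_le x y)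

lemma abs_tsum_mul_le (x : ℓ¹) (y : ℓ∞) : |∑' n, x n * y n| ≤ ‖x‖ * ‖y‖ := by
  have habs : Summable fun n => |x n * y n| := (summable_mul_l1_linf x y).abs
  calc |∑' n, x n * y n| ≤ ∑' n, |x n * y n| := by
        simpa only [Real.norm_eq_abs] using
          norm_tsum_le_tsum_norm (f := fun n => x n * y n) (by simpa only [Real.norm_eq_abs])
    _ ≤ ∑' n, |x n| * ‖y‖ :=
        habs.tsum_le_tsum (abs_mul_apply_le x y) ((hasSum_abs_l1 x).summable.mul_right _)
    _ = ‖x‖ * ‖y‖ := ((hasSum_abs_l1 x).mul_right _).tsum_eq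

noncomputable def l1Pairing (x : ℓ¹) : ℓ∞ →ₗ[ℝ] ℝ where
  toFun y := ∑' n, x n * y n
  map_add' y z := by
    simp only [lp.coeFn_add, Pi.add_apply, mul_add]
    exact (summable_mul_l1_linf x y).tsum_add (summable_mul_l1_linf x z)
  map_smul' c y := by
    simp only [lp.coeFn_smul, Pi.smul_apply, smul_eq_mul, RingHom.id_apply, mul_left_comm _ c]
    exact tsum_mul_left

lemma l1Pairing_apply (x : ℓ¹) (y : ℓ∞) : l1Pairing x y = ∑' n, x n * y n := rfl

section Gossez

variable {G : ℓ¹ →L[ℝ] ℓ∞} {lam ε : ℝ} {x : ℓ¹} {xs f : ℓ∞}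

lemma norm_eq_of_mem_dualityMapL1 (h : xs ∈ dualityMapL1 x) : ‖xs‖ = ‖x‖ :=
  (pow_left_inj₀ (norm_nonneg _) (norm_nonneg _) two_ne_zero).mp h.2.symm

lemma l1Pairing_le_norm_of_forall_eq_neg_one (hf : ∀ n, f n = -1) (x : ℓ¹) :
    l1Pairing x f ≤ ‖x‖ := by
  have hf1 : ‖f‖ ≤ 1 := lp.norm_le_of_forall_le zero_le_one fun n => by simp [hf]
  calc l1Pairing x f ≤ ‖x‖ * ‖f‖ := (le_abs_self _).trans (abs_tsum_mul_le x f)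
    _ ≤ ‖x‖ := mul_le_of_le_one_right (norm_nonneg x) hf1

lemma l1Pairing_eq_neg_tsum_of_forall_eq_neg_one (hf : ∀ n, f n = -1) (x : ℓ¹) :
    l1Pairing x f = -∑' n, x n := by
  simp [l1Pairing_apply, hf, tsum_neg]

lemma l1Pairing_apply_self_eq_zero (hG : ∀ x n, G x n = gossezSeq x n) (x : ℓ¹) :
    l1Pairing x (G x) = 0 := by
  have hx := ((hasSum_abs_l1 x).summable.of_abs).hasSum
  refine ((summable_mul_l1_linf x (G x)).hasSum_iff_tendsto_nat.mpr ?_).tsum_eq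
  simpa only [hG] using tendsto_sum_range_mul_gossezSeq hx

lemma tendsto_apply_gossez (hG : ∀ x n, G x n = gossezSeq x n) (x : ℓ¹) :
    Tendsto (fun n => G x n) atTop (𝓝 (-∑' n, x n)) := by
  simpa only [hG] using tendsto_gossezSeq ((hasSum_abs_l1 x).summable.of_abs).hasSum

lemma mul_norm_sq_sub_l1Pairing_le (hG : ∀ x n, G x n = gossezSeq x n)
    (hxs : xs ∈ dualityMapL1 x) (h : ‖G x + lam • xs - f‖ ≤ ε) :
    lam * ‖x‖ ^ 2 - l1Pairing x f ≤ ε * ‖x‖ := by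
  have hpair : l1Pairing x (G x + lam • xs - f) = lam * ‖x‖ ^ 2 - l1Pairing x f := by
    rw [map_sub, map_add, map_smul, l1Pairing_apply_self_eq_zero hG, l1Pairing_apply x xs, hxs.1,
      smul_eq_mul, zero_add]
  calc lam * ‖x‖ ^ 2 - l1Pairing x f ≤ ‖x‖ * ‖G x + lam • xs - f‖ :=
        hpair ▸ (le_abs_self _).trans (abs_tsum_mul_le x _)
    _ ≤ ε * ‖x‖ := by rw [mul_comm ε]; exact mul_le_mul_of_nonneg_left h (norm_nonneg x)

lemma one_add_l1Pairing_sub_le (hG : ∀ x n, G x n = gossezSeq x n) (hlam : 0 ≤ lam)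
    (hf : ∀ n, f n = -1) (hxs : xs ∈ dualityMapL1 x) (h : ‖G x + lam • xs - f‖ ≤ ε) :
    1 + l1Pairing x f - ε ≤ lam * ‖x‖ := by
  have hcoord : ∀ n, 1 + G x n - ε ≤ lam * ‖x‖ := fun n => by
    have he := (abs_apply_le_norm_linf _ n).trans h
    have hxsn := abs_apply_le_norm_linf xs n
    rw [norm_eq_of_mem_dualityMapL1 hxs] at hxsn
    simp only [lp.coeFn_sub, lp.coeFn_add, lp.coeFn_smul, Pi.sub_apply, Pi.add_apply,
      Pi.smul_apply, smul_eq_mul, hf] at he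
    nlinarith [abs_le.mp he, abs_le.mp hxsn]
  rw [l1Pairing_eq_neg_tsum_of_forall_eq_neg_one hf]
  exact le_of_tendsto' (((tendsto_apply_gossez hG x).const_add 1).sub_const ε) hcoord

end Gossez

/-- Multiplying `hT` by `a` and adding `hA` gives `a (1 + p - 2ε) ≤ p`; then `p ≤ a` leaves
`p ≤ 2ε`. -/
lemma le_two_mul_of_duality_bounds {lam ε a p : ℝ} (ha : 0 ≤ a) (hε : 0 ≤ ε) (hpa : p ≤ a)
    (hA : lam * a ^ 2 - p ≤ ε * a) (hT : 1 + p - ε ≤ lam * a) : p ≤ 2 * ε := by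
  by_contra! hp
  nlinarith [mul_le_mul_of_nonneg_left hT ha]

lemma exists_pos_not_duality_bounds {lam : ℝ} (hlam : 0 < lam) :
    ∃ ε > 0, ∀ a p : ℝ, 0 ≤ a → p ≤ a → lam * a ^ 2 - p ≤ ε * a → 1 + p - ε ≤ lam * a → False := by
  refine ⟨min lam lam⁻¹ / 64, by positivity, fun a p ha hpa hA hT => ?_⟩
  set ε := min lam lam⁻¹ / 64
  have hε_lam : ε ≤ lam / 64 := div_le_div_of_nonneg_right (min_le_left _ _) (by norm_num)
  have hlam_ε : lam * ε ≤ 1 / 64 := by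
    have : ε ≤ lam⁻¹ / 64 := div_le_div_of_nonneg_right (min_le_right _ _) (by norm_num)
    calc lam * ε ≤ lam * (lam⁻¹ / 64) := mul_le_mul_of_nonneg_left this hlam.le
      _ = 1 / 64 := by field_simp
  have hε : 0 < ε := by positivity
  have hp := le_two_mul_of_duality_bounds ha hε.le hpa hA hT
  have hlam_a : 63 / 128 ≤ lam * a := by nlinarith [mul_nonneg hlam.le (sq_nonneg a)]
  have ha_ε : a ≤ 16 * ε := by nlinarith [mul_le_mul_of_nonneg_right hlam_a ha]
  nlinarith [mul_le_mul_of_nonneg_left ha_ε hlam.le]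

def rangeAddDuality (G : ℓ¹ →L[ℝ] ℓ∞) (lam : ℝ) : Set ℓ∞ :=
  {g | ∃ x xs, xs ∈ dualityMapL1 x ∧ g = G x + lam • xs}

lemma notMem_closure_rangeAddDuality {G : ℓ¹ →L[ℝ] ℓ∞} (hG : ∀ x n, G x n = gossezSeq x n)
    {lam : ℝ} (hlam : 0 < lam) {f : ℓ∞} (hf : ∀ n, f n = -1) :
    f ∉ closure (rangeAddDuality G lam) := by
  obtain ⟨ε, hε, hbounds⟩ := exists_pos_not_duality_bounds hlam
  rw [Metric.mem_closure_iff]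
  push Not
  refine ⟨ε, hε, ?_⟩
  rintro _ ⟨x, xs, hxs, rfl⟩
  by_contra! hlt
  have h : ‖G x + lam • xs - f‖ ≤ ε := by rw [← dist_eq_norm, dist_comm]; exact hlt.le
  exact hbounds _ _ (norm_nonneg x) (l1Pairing_le_norm_of_forall_eq_neg_one hf x)
    (mul_norm_sq_sub_l1Pairing_le hG hxs h) (one_add_l1Pairing_sub_le hG hlam.le hf hxs h)

lemma mem_dualityMapL1_single_s17 (m : ℕ) (c : ℝ) {u : ℓ∞} (hum : u m = c) (hu : ‖u‖ ≤ |c|) :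
    u ∈ dualityMapL1 (lp.single 1 m c : ℓ¹) := by
  have hnorm_u : ‖u‖ = |c| := le_antisymm hu (hum ▸ abs_apply_le_norm_linf u m)
  have hnorm_x : ‖(lp.single 1 m c : ℓ¹)‖ = |c| := by simp [lp.norm_single]
  refine ⟨?_, by rw [hnorm_u, hnorm_x]⟩
  rw [tsum_eq_single m fun n hn => by simp [hn], lp.single_apply_self,
    hum, hnorm_x, sq_abs, sq]

lemma sub_single_mem_convexHull_rangeAddDuality (G : ℓ¹ →L[ℝ] ℓ∞) {lam : ℝ} (hlam : lam ≠ 0)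
    (y : ℓ∞) (m : ℕ) : y - lp.single ⊤ m (y m) ∈ convexHull ℝ (rangeAddDuality G lam) := by
  set t := ‖y‖ / |lam|
  let u (c : ℝ) : ℓ∞ := lam⁻¹ • y + lp.single ⊤ m (c - lam⁻¹ * y m)
  have hu_apply (c : ℝ) (n : ℕ) : u c n = if n = m then c else lam⁻¹ * y n := by
    simp only [u, lp.coeFn_add, lp.coeFn_smul, Pi.add_apply, Pi.smul_apply, smul_eq_mul,
      lp.single_apply, Pi.single_apply]
    split_ifs with hn
    · subst hn; ring
    · ring
  have hu : ∀ c, |c| = t → G (lp.single 1 m c) + lam • u c ∈ rangeAddDuality G lam := by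
    intro c hc
    refine ⟨_, u c, mem_dualityMapL1_single_s17 m c (by simp [hu_apply]) ?_, rfl⟩
    refine lp.norm_le_of_forall_le (abs_nonneg c) fun n => ?_
    rw [hu_apply, Real.norm_eq_abs]
    split_ifs
    · exact le_rfl
    · rw [abs_mul, abs_inv, inv_mul_eq_div, hc]
      exact div_le_div_of_nonneg_right (abs_apply_le_norm_linf y n) (abs_nonneg lam)
  have hmid : y - lp.single ⊤ m (y m) = (1 / 2 : ℝ) • (G (lp.single 1 m t) + lam • u t)
      + (1 / 2 : ℝ) • (G (lp.single 1 m (-t)) + lam • u (-t)) := by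
    rw [lp.single_neg, map_neg]
    ext n
    simp only [lp.coeFn_add, lp.coeFn_sub, lp.coeFn_smul, lp.coeFn_neg, Pi.add_apply,
      Pi.sub_apply, Pi.smul_apply, Pi.neg_apply, smul_eq_mul, hu_apply, lp.single_apply,
      Pi.single_apply]
    split_ifs with hn
    · subst hn; ring
    · field_simp; ring
  rw [hmid]
  have ht : |t| = t := abs_of_nonneg (by positivity)
  exact convex_convexHull ℝ _ (subset_convexHull ℝ _ (hu t ht))
    (subset_convexHull ℝ _ (hu (-t) (by rw [abs_neg, ht]))) (by norm_num) (by norm_num)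
    (by norm_num)

lemma mem_closure_of_forall_sub_single_mem {E : Type*} [NormedAddCommGroup E] [NormedSpace ℝ E]
    {C : Set (lp (fun _ : ℕ => E) ⊤)} (hC : Convex ℝ C) {y : lp (fun _ : ℕ => E) ⊤}
    (h : ∀ m, y - lp.single ⊤ m (y m) ∈ C) : y ∈ closure C := by
  have hsum_norm (N : ℕ) : ‖∑ m ∈ range N, lp.single ⊤ m (y m)‖ ≤ ‖y‖ := by
    refine lp.norm_le_of_forall_le (norm_nonneg y) fun n => ?_
    rw [lp.coeFn_sum, Finset.sum_apply]
    simp only [lp.single_apply, Finset.sum_pi_single]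
    split_ifs
    · exact lp.norm_apply_le_norm ENNReal.top_ne_zero y n
    · simp
  let w (N : ℕ) := ∑ m ∈ range (N + 1), ((N : ℝ) + 1)⁻¹ • (y - lp.single ⊤ m (y m))
  have hw_mem (N : ℕ) : w N ∈ C :=
    hC.sum_mem (fun _ _ => by positivity)
      (by rw [sum_const, card_range, nsmul_eq_mul, Nat.cast_add_one,
        mul_inv_cancel₀ (by positivity)])
      fun m _ => h m
  have hw_sub (N : ℕ) : y - w N = ((N : ℝ) + 1)⁻¹ • ∑ m ∈ range (N + 1), lp.single ⊤ m (y m) := by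
    simp only [w, smul_sub, sum_sub_distrib, ← smul_sum, sum_const, card_range]
    rw [← Nat.cast_smul_eq_nsmul ℝ, smul_smul, Nat.cast_add_one, inv_mul_cancel₀ (by positivity),
      one_smul, sub_sub_cancel]
  have hw_lim : Tendsto w atTop (𝓝 y) := by
    rw [tendsto_iff_norm_sub_tendsto_zero]
    refine squeeze_zero (fun _ => norm_nonneg _) (fun N => ?_)
      ((tendsto_const_div_atTop_nhds_zero_nat ‖y‖).comp (tendsto_add_atTop_nat 1))
    rw [norm_sub_rev, hw_sub, norm_smul, Function.comp_apply, Nat.cast_add_one, div_eq_inv_mul,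
      norm_inv, Real.norm_of_nonneg (by positivity)]
    exact mul_le_mul_of_nonneg_left (hsum_norm _) (by positivity)
  exact mem_closure_of_tendsto hw_lim (Eventually.of_forall hw_mem)

lemma closure_convexHull_rangeAddDuality_eq_univ (G : ℓ¹ →L[ℝ] ℓ∞) {lam : ℝ} (hlam : lam ≠ 0) :
    closure (convexHull ℝ (rangeAddDuality G lam)) = Set.univ :=
  Set.eq_univ_of_forall fun y => mem_closure_of_forall_sub_single_mem (convex_convexHull ℝ _)
    (sub_single_mem_convexHull_rangeAddDuality G hlam y)

theorem stmt17 (G : lp (fun _ : ℕ => ℝ) 1 →L[ℝ] lp (fun _ : ℕ => ℝ) ⊤)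
    (hG : ∀ x : lp (fun _ : ℕ => ℝ) 1, ∀ n : ℕ,
      G x n = -(∑ k ∈ Finset.range n, x k) + ∑' k : ℕ, if n < k then x k else 0)
    (f : lp (fun _ : ℕ => ℝ) ⊤) (hf : ∀ n, f n = -1) :
    (∀ lam > (0:ℝ), ∀ ε > (0:ℝ), ∀ x : lp (fun _ : ℕ => ℝ) 1,
      (∃ xs ∈ dualityMapL1 x, ‖G x + lam • xs - f‖ ≤ ε) → ∑' n, x n * f n ≤ 3 * ε) ∧
    ∀ lam > (0:ℝ),
      let R := closure {g : lp (fun _ : ℕ => ℝ) ⊤ |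
        ∃ x xs, xs ∈ dualityMapL1 x ∧ g = G x + lam • xs}
      ¬ Convex ℝ R ∧ closure (convexHull ℝ R) = Set.univ := by
  refine ⟨fun lam hlam ε hε x ⟨xs, hxs, hnear⟩ => ?_, fun lam hlam => ?_⟩
  · have hp := le_two_mul_of_duality_bounds (norm_nonneg x) hε.le
      (l1Pairing_le_norm_of_forall_eq_neg_one hf x) (mul_norm_sq_sub_l1Pairing_le hG hxs hnear)
      (one_add_l1Pairing_sub_le hG hlam.le hf hxs hnear)
    rw [l1Pairing_apply] at hp
    linarith
  · change ¬ Convex ℝ (closure (rangeAddDuality G lam)) ∧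
      closure (convexHull ℝ (closure (rangeAddDuality G lam))) = Set.univ
    have hdense : closure (convexHull ℝ (closure (rangeAddDuality G lam))) = Set.univ := by
      refine Set.eq_univ_of_univ_subset ?_
      rw [← closure_convexHull_rangeAddDuality_eq_univ G hlam.ne']
      exact closure_mono (convexHull_mono subset_closure)
    refine ⟨fun hconv => notMem_closure_rangeAddDuality hG hlam hf ?_, hdense⟩
    rw [← closure_closure, ← hconv.convexHull_eq, hdense]
    trivial
end

section
/- The Fitzpatrick–Phelps operator F : L¹[0,1] → L∞[0,1], defined by (Fx)(t) = ∫₀ᵗ x(s) ds − ∫ₜ¹ x(s) ds, is a bounded linear operator with ‖F‖ = 1 and is skew: ⟨x, Fx⟩ = ∫₀¹ x(t)(Fx)(t) dt = 0 for every x ∈ L¹[0,1]. -/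
/-!
For a measure `μ` on a linear order put `Fx(t) = ∫_{s<t} x - ∫_{s>t} x`; on `[0,1]` this agrees with
the half-open integrals of the statement because points are null. Then `|Fx(t)| ≤ ‖x‖₁` for every
`t`, so `‖F‖ ≤ 1`. Skewness is Fubini: `∫ x·Fx` is the integral of `x(t)x(s)` over the triangle
`s < t` minus the integral over `t < s`, and the flip `(t, s) ↦ (s, t)` exchanges the two.
The bound is attained by `x = 1_{[0,1/2]}`, for which `Fx = ‖x‖₁` on `(1/2, 1]`.
-/

open MeasureTheory Set ENNReal

lemma MeasureTheory.Lp.le_norm_of_ae_restrict_le_norm {β E : Type*} [MeasurableSpace β]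
    [NormedAddCommGroup E] {ν : Measure β} (g : Lp E ∞ ν) {S : Set β} (hS : ν S ≠ 0) {c : ℝ}
    (hc : ∀ᵐ t ∂ν.restrict S, c ≤ ‖g t‖) : c ≤ ‖g‖ := by
  have : (ae (ν.restrict S)).NeBot := ae_neBot.2 (by rwa [Ne, Measure.restrict_eq_zero])
  obtain ⟨t, hct, hgt⟩ := (hc.and (ae_restrict_of_ae (ae_le_eLpNormEssSup (f := g)))).exists
  rw [Lp.norm_def, eLpNorm_exponent_top]
  exact hct.trans ((toReal_enorm _).symm.le.trans (ENNReal.toReal_mono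
    (by simpa [eLpNorm_exponent_top] using Lp.eLpNorm_ne_top g) hgt))

namespace FitzpatrickPhelps

section Sections

variable {α : Type*} [MeasurableSpace α] {μ : Measure α} {S : Set (α × α)} {f : α → ℝ}

lemma setIntegral_prodMk_preimage_eq_integral_indicator (hS : MeasurableSet S) (t : α)
    (g : α → ℝ) :
    ∫ s in Prod.mk t ⁻¹' S, g s ∂μ = ∫ s, S.indicator (fun p => g p.2) (t, s) ∂μ := by
  rw [← integral_indicator (measurable_prodMk_left hS)]
  rfl

lemma stronglyMeasurable_setIntegral_prodMk_preimage [SFinite μ] (hS : MeasurableSet S)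
    (hf : StronglyMeasurable f) :
    StronglyMeasurable fun t => ∫ s in Prod.mk t ⁻¹' S, f s ∂μ := by
  simp_rw [setIntegral_prodMk_preimage_eq_integral_indicator hS]
  exact ((hf.comp_measurable measurable_snd).indicator hS).integral_prod_right'

lemma mul_setIntegral_prodMk_preimage (hS : MeasurableSet S) (t : α) :
    f t * ∫ s in Prod.mk t ⁻¹' S, f s ∂μ =
      ∫ s, S.indicator (fun p => f p.1 * f p.2) (t, s) ∂μ := by
  rw [setIntegral_prodMk_preimage_eq_integral_indicator hS, ← integral_const_mul]
  congr 1 with s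
  by_cases h : (t, s) ∈ S <;> simp [h]

lemma integrable_mul_setIntegral_prodMk_preimage [SFinite μ] (hS : MeasurableSet S)
    (hf : Integrable f μ) :
    Integrable (fun t => f t * ∫ s in Prod.mk t ⁻¹' S, f s ∂μ) μ := by
  simp_rw [mul_setIntegral_prodMk_preimage hS]
  exact ((hf.mul_prod hf).indicator hS).integral_prod_left

lemma integral_mul_setIntegral_prodMk_preimage [SFinite μ] (hS : MeasurableSet S)
    (hf : Integrable f μ) :
    ∫ t, f t * ∫ s in Prod.mk t ⁻¹' S, f s ∂μ ∂μ = ∫ p in S, f p.1 * f p.2 ∂μ.prod μ := by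
  simp_rw [mul_setIntegral_prodMk_preimage hS]
  rw [← integral_prod _ ((hf.mul_prod hf).indicator hS), integral_indicator hS]

lemma setIntegral_preimage_swap_mul [SFinite μ] :
    ∫ p in Prod.swap ⁻¹' S, f p.1 * f p.2 ∂μ.prod μ = ∫ p in S, f p.1 * f p.2 ∂μ.prod μ := by
  simpa only [Prod.fst_swap, Prod.snd_swap, mul_comm] using
    Measure.measurePreserving_swap.setIntegral_preimage_emb
      MeasurableEquiv.prodComm.measurableEmbedding (fun p : α × α => f p.1 * f p.2) S

end Sections

section SignedPrimitive

variable {α : Type*} [LinearOrder α] [MeasurableSpace α] (μ : Measure α)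

noncomputable def signedPrimitive (f : α → ℝ) (t : α) : ℝ :=
  ∫ s in Iio t, f s ∂μ - ∫ s in Ioi t, f s ∂μ

variable {μ} {f g : α → ℝ}

lemma signedPrimitive_congr_ae (h : f =ᵐ[μ] g) : signedPrimitive μ f = signedPrimitive μ g := by
  ext t
  simp only [signedPrimitive, integral_congr_ae (ae_restrict_of_ae h)]

lemma signedPrimitive_add (hf : Integrable f μ) (hg : Integrable g μ) :
    signedPrimitive μ (f + g) = signedPrimitive μ f + signedPrimitive μ g := by
  ext t
  simp only [signedPrimitive, Pi.add_apply, integral_add hf.integrableOn hg.integrableOn]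
  ring

lemma signedPrimitive_smul (c : ℝ) (f : α → ℝ) :
    signedPrimitive μ (c • f) = c • signedPrimitive μ f := by
  ext t
  simp only [signedPrimitive, Pi.smul_apply, smul_eq_mul, integral_const_mul]
  ring

variable [TopologicalSpace α] [OrderClosedTopology α] [OpensMeasurableSpace α]

lemma abs_signedPrimitive_le (hf : Integrable f μ) (t : α) :
    |signedPrimitive μ f t| ≤ ∫ s, |f s| ∂μ := by
  have hdisj : Disjoint (Iio t) (Ioi t) := disjoint_left.2 fun s h h' => lt_asymm h h'
  calc |signedPrimitive μ f t|
      ≤ |∫ s in Iio t, f s ∂μ| + |∫ s in Ioi t, f s ∂μ| := abs_sub _ _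
    _ ≤ (∫ s in Iio t, |f s| ∂μ) + ∫ s in Ioi t, |f s| ∂μ :=
        add_le_add abs_integral_le_integral_abs abs_integral_le_integral_abs
    _ = ∫ s in Iio t ∪ Ioi t, |f s| ∂μ :=
        (setIntegral_union hdisj measurableSet_Ioi hf.abs.integrableOn hf.abs.integrableOn).symm
    _ ≤ ∫ s, |f s| ∂μ := setIntegral_le_integral hf.abs (.of_forall fun s => abs_nonneg _)

lemma signedPrimitive_restrict_Icc [NullSingletonClass μ] (a b t : α) :
    signedPrimitive (μ.restrict (Icc a b)) f t =
      ∫ s in Ioc a t, f s ∂μ.restrict (Icc a b) - ∫ s in Ioc t b, f s ∂μ.restrict (Icc a b) := by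
  have hmem : ∀ᵐ s ∂μ.restrict (Icc a b), s ∈ Icc a b := ae_restrict_mem measurableSet_Icc
  have hlow : Ioc a t =ᵐ[μ.restrict (Icc a b)] Iio t := by
    refine Filter.eventuallyEq_set.2 ?_
    filter_upwards [hmem, Measure.ae_ne _ a, Measure.ae_ne _ t] with s hs hsa hst
    exact ⟨fun h => lt_of_le_of_ne h.2 hst, fun h => ⟨lt_of_le_of_ne hs.1 hsa.symm, h.le⟩⟩
  have hup : Ioc t b =ᵐ[μ.restrict (Icc a b)] Ioi t := by
    refine Filter.eventuallyEq_set.2 ?_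
    filter_upwards [hmem] with s hs
    exact ⟨And.left, fun h => ⟨h, hs.2⟩⟩
  rw [signedPrimitive, setIntegral_congr_set hlow, setIntegral_congr_set hup]

lemma signedPrimitive_indicator_Iic {a t : α} (hat : a < t) :
    signedPrimitive μ ((Iic a).indicator fun _ => 1) t = μ.real (Iic a) := by
  have hlow : Iic a ∩ Iio t = Iic a := inter_eq_left.2 (Iic_subset_Iio.2 hat)
  have hup : Iic a ∩ Ioi t = ∅ :=
    eq_empty_of_forall_notMem fun s ⟨hsa, hts⟩ => (hat.trans hts).not_ge hsa
  simp [signedPrimitive, hlow, hup]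

variable [SecondCountableTopology α]

lemma stronglyMeasurable_signedPrimitive [SFinite μ] (hf : AEStronglyMeasurable f μ) :
    StronglyMeasurable (signedPrimitive μ f) := by
  rw [signedPrimitive_congr_ae hf.ae_eq_mk]
  exact (stronglyMeasurable_setIntegral_prodMk_preimage
      (measurableSet_lt measurable_snd measurable_fst) hf.stronglyMeasurable_mk).sub
    (stronglyMeasurable_setIntegral_prodMk_preimage
      (measurableSet_lt measurable_fst measurable_snd) hf.stronglyMeasurable_mk)

lemma integral_mul_signedPrimitive [SFinite μ] (hf : Integrable f μ) :
    ∫ t, f t * signedPrimitive μ f t ∂μ = 0 := by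
  have hS : MeasurableSet {p : α × α | p.2 < p.1} := measurableSet_lt measurable_snd measurable_fst
  have hS' : MeasurableSet (Prod.swap ⁻¹' {p : α × α | p.2 < p.1}) := hS.preimage measurable_swap
  calc ∫ t, f t * signedPrimitive μ f t ∂μ
      = ∫ p in {p : α × α | p.2 < p.1}, f p.1 * f p.2 ∂μ.prod μ
          - ∫ p in Prod.swap ⁻¹' {p : α × α | p.2 < p.1}, f p.1 * f p.2 ∂μ.prod μ := by
        rw [← integral_mul_setIntegral_prodMk_preimage hS hf,
          ← integral_mul_setIntegral_prodMk_preimage hS' hf,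
          ← integral_sub (integrable_mul_setIntegral_prodMk_preimage hS hf)
            (integrable_mul_setIntegral_prodMk_preimage hS' hf)]
        simp only [signedPrimitive, mul_sub]
        rfl
    _ = 0 := by rw [setIntegral_preimage_swap_mul, sub_self]

end SignedPrimitive

section Operator

variable {α : Type*} [LinearOrder α] [TopologicalSpace α] [OrderClosedTopology α]
  [SecondCountableTopology α] [MeasurableSpace α] [OpensMeasurableSpace α]
  (μ : Measure α) [SFinite μ]

lemma memLp_top_signedPrimitive {f : α → ℝ} (hf : Integrable f μ) :
    MemLp (signedPrimitive μ f) ∞ μ :=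
  memLp_top_of_bound
    (stronglyMeasurable_signedPrimitive hf.aestronglyMeasurable).aestronglyMeasurable _
    (.of_forall (abs_signedPrimitive_le hf))

noncomputable def fitzpatrickPhelpsₗ : Lp ℝ 1 μ →ₗ[ℝ] Lp ℝ ∞ μ where
  toFun x := (memLp_top_signedPrimitive μ (L1.integrable_coeFn x)).toLp
  map_add' x y := by
    refine (MemLp.toLp_congr _ ((memLp_top_signedPrimitive μ (L1.integrable_coeFn x)).add
      (memLp_top_signedPrimitive μ (L1.integrable_coeFn y))) (.of_eq ?_)).trans
      (MemLp.toLp_add _ _)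
    rw [signedPrimitive_congr_ae (Lp.coeFn_add x y),
      signedPrimitive_add (L1.integrable_coeFn x) (L1.integrable_coeFn y)]
  map_smul' c x := by
    refine (MemLp.toLp_congr _ ((memLp_top_signedPrimitive μ (L1.integrable_coeFn x)).const_smul c)
      (.of_eq ?_)).trans (MemLp.toLp_const_smul _ _)
    rw [signedPrimitive_congr_ae (Lp.coeFn_smul c x), signedPrimitive_smul]

lemma norm_fitzpatrickPhelpsₗ_le (x : Lp ℝ 1 μ) : ‖fitzpatrickPhelpsₗ μ x‖ ≤ 1 * ‖x‖ := by
  rw [one_mul, fitzpatrickPhelpsₗ, LinearMap.coe_mk, AddHom.coe_mk, Lp.norm_toLp,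
    eLpNorm_exponent_top, L1.norm_eq_integral_norm]
  refine ENNReal.toReal_le_of_le_ofReal (integral_nonneg fun _ => norm_nonneg _) ?_
  exact eLpNormEssSup_le_of_ae_bound (.of_forall (abs_signedPrimitive_le (L1.integrable_coeFn x)))

noncomputable def fitzpatrickPhelps : Lp ℝ 1 μ →L[ℝ] Lp ℝ ∞ μ :=
  (fitzpatrickPhelpsₗ μ).mkContinuous 1 (norm_fitzpatrickPhelpsₗ_le μ)

lemma coeFn_fitzpatrickPhelps (x : Lp ℝ 1 μ) :
    fitzpatrickPhelps μ x =ᵐ[μ] signedPrimitive μ x :=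
  MemLp.coeFn_toLp (memLp_top_signedPrimitive μ (L1.integrable_coeFn x))

lemma norm_fitzpatrickPhelps_le : ‖fitzpatrickPhelps μ‖ ≤ 1 :=
  LinearMap.mkContinuous_norm_le _ zero_le_one _

lemma one_le_norm_fitzpatrickPhelps (a : α) (hfin : μ (Iic a) ≠ ∞) (h0 : μ (Iic a) ≠ 0)
    (h1 : μ (Ioi a) ≠ 0) : 1 ≤ ‖fitzpatrickPhelps μ‖ := by
  set x := indicatorConstLp 1 measurableSet_Iic hfin (1 : ℝ)
  have hx : ‖x‖ = μ.real (Iic a) := by simp [x, norm_indicatorConstLp]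
  have hFx : μ.real (Iic a) ≤ ‖fitzpatrickPhelps μ x‖ := by
    refine Lp.le_norm_of_ae_restrict_le_norm _ h1 ?_
    filter_upwards [ae_restrict_of_ae (coeFn_fitzpatrickPhelps μ x),
      ae_restrict_mem measurableSet_Ioi] with t hFt hat
    rw [hFt, signedPrimitive_congr_ae indicatorConstLp_coeFn, signedPrimitive_indicator_Iic hat]
    exact le_abs_self _
  have hpos : 0 < ‖x‖ := hx ▸ ENNReal.toReal_pos h0 hfin
  refine le_of_mul_le_mul_right ?_ hpos
  rw [one_mul]
  exact (hx ▸ hFx).trans ((fitzpatrickPhelps μ).le_opNorm x)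

lemma integral_mul_fitzpatrickPhelps (x : Lp ℝ 1 μ) :
    ∫ t, x t * fitzpatrickPhelps μ x t ∂μ = 0 := by
  rw [integral_congr_ae ((coeFn_fitzpatrickPhelps μ x).mono fun t ht => by rw [ht])]
  exact integral_mul_signedPrimitive (L1.integrable_coeFn x)

end Operator

end FitzpatrickPhelps

open FitzpatrickPhelps

theorem stmt18 :
    ∃ F : Lp ℝ 1 (volume.restrict (Set.Icc (0:ℝ) 1)) →L[ℝ]
          Lp ℝ ⊤ (volume.restrict (Set.Icc (0:ℝ) 1)),
      (∀ x : Lp ℝ 1 (volume.restrict (Set.Icc (0:ℝ) 1)),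
        ∀ᵐ t ∂(volume.restrict (Set.Icc (0:ℝ) 1)),
          F x t = (∫ s in Set.Ioc (0:ℝ) t, x s ∂(volume.restrict (Set.Icc (0:ℝ) 1))) -
                  (∫ s in Set.Ioc t (1:ℝ), x s ∂(volume.restrict (Set.Icc (0:ℝ) 1)))) ∧
      ‖F‖ = 1 ∧
      ∀ x : Lp ℝ 1 (volume.restrict (Set.Icc (0:ℝ) 1)),
        ∫ t, x t * F x t ∂(volume.restrict (Set.Icc (0:ℝ) 1)) = 0 := by
  have hlow : volume.restrict (Icc (0:ℝ) 1) (Iic (1/2)) ≠ 0 := by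
    rw [Measure.restrict_apply measurableSet_Iic,
      show Iic (1/2 : ℝ) ∩ Icc 0 1 = Icc 0 (1/2) by
        ext; simp only [mem_inter_iff, mem_Iic, mem_Icc]; grind]
    simp
  have hup : volume.restrict (Icc (0:ℝ) 1) (Ioi (1/2)) ≠ 0 := by
    rw [Measure.restrict_apply measurableSet_Ioi,
      show Ioi (1/2 : ℝ) ∩ Icc 0 1 = Ioc (1/2) 1 by
        ext; simp only [mem_inter_iff, mem_Ioi, mem_Icc, mem_Ioc]; grind]
    norm_num
  refine ⟨fitzpatrickPhelps _, fun x => ?_, le_antisymm (norm_fitzpatrickPhelps_le _)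
    (one_le_norm_fitzpatrickPhelps _ (1/2) (measure_ne_top _ _) hlow hup),
    integral_mul_fitzpatrickPhelps _⟩
  filter_upwards [coeFn_fitzpatrickPhelps _ x] with t ht
  rw [ht, signedPrimitive_restrict_Icc]
end
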